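/- Let M be the MDP with states S = {s, t₁, t₂} and actions Act = {α, β, γ}, where P(s,α,t₁) = P(s,β,t₂) = P(t₁,γ,s) = P(t₂,γ,t₂) = 1 and all other transition probabilities are 0. Then (i) there exists a scheduler σ for M with Pr^{M,σ}_s(◇{t₁}) = Pr^{M,σ}_s(◇{t₂}); and (ii) for every memoryless (possibly randomized) scheduler σ for M, Pr^{M,σ}_s(◇{t₁}) ≠ Pr^{M,σ}_s(◇{t₂}). In particular, memory is necessary for satisfying relational reachability properties with exact equality. -/

import Mathlib

open scoped Classical
open Filter

noncomputable section

/-- A Markov decision process with state space `S` and action space `A`. -/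
structure MDP (S A : Type) where
  P : S → A → S → ℝ
  nonneg : ∀ s a s', 0 ≤ P s a s'
  le_one : ∀ s a s', P s a s' ≤ 1
  exists_enabled : ∀ s : S, ∃ a : A, (∑' s', P s a s') = 1
  zero_of_not_enabled : ∀ (s : S) (a : A), (∑' s', P s a s') ≠ 1 → (∑' s', P s a s') = 0

namespace MDP

variable {S A : Type}

/-- Action `a` is enabled in state `s`. -/
def Enabled (M : MDP S A) (s : S) (a : A) : Prop := (∑' s', M.P s a s') = 1

/-- `s` is an absorbing state. -/
def AbsorbingState (M : MDP S A) (s : S) : Prop := ∀ a : A, M.Enabled s a → M.P s a s = 1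

/-- An absorbing set of states: all its elements are absorbing. -/
def AbsorbingSet (M : MDP S A) (T : Set S) : Prop := ∀ s ∈ T, M.AbsorbingState s

end MDP

/-- A finite path: an initial state together with a list of (action, next state) steps. -/
abbrev FPath (S A : Type) : Type := S × List (A × S)

/-- The last state of a finite path. -/
def fpLast {S A : Type} (p : FPath S A) : S := ((p.2.map Prod.snd).getLast?).getD p.1

/-- Extending a finite path by one step. -/
def fpExt {S A : Type} (p : FPath S A) (a : A) (s' : S) : FPath S A := (p.1, p.2 ++ [(a, s')])

/-- A (history-dependent, randomized) scheduler for the MDP `M`. -/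
structure Scheduler {S A : Type} (M : MDP S A) where
  act : FPath S A → A → ℝ
  nonneg : ∀ p a, 0 ≤ act p a
  sum_one : ∀ p, (∑' a, act p a) = 1
  not_enabled : ∀ p a, ¬ M.Enabled (fpLast p) a → act p a = 0

namespace Scheduler

variable {S A : Type} {M : MDP S A}

/-- A memoryless scheduler depends only on the last state of the path. -/
def Memoryless (σ : Scheduler M) : Prop :=
  ∀ p : FPath S A, σ.act p = σ.act (fpLast p, ([] : List (A × S)))

/-- A deterministic scheduler chooses a Dirac distribution on every path. -/
def Deterministic (σ : Scheduler M) : Prop := ∀ p : FPath S A, ∃ a : A, σ.act p a = 1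

/-- A memoryless deterministic (MD) scheduler. -/
def MD (σ : Scheduler M) : Prop := σ.Memoryless ∧ σ.Deterministic

end Scheduler

/-- One-step expectation operator: expected value of `g` after one step from `p`. -/
def stepExp {S A : Type} (M : MDP S A) (σ : Scheduler M) (p : FPath S A)
    (g : FPath S A → ℝ) : ℝ :=
  ∑' a : A, ∑' s' : S, σ.act p a * M.P (fpLast p) a s' * g (fpExt p a s')

/-- Probability of visiting `T` within `n` further steps, continuing the finite path `p`. -/
def reachN {S A : Type} (M : MDP S A) (σ : Scheduler M) (T : Set S) :
    ℕ → FPath S A → ℝ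
  | 0, p => if fpLast p ∈ T then 1 else 0
  | n + 1, p => if fpLast p ∈ T then 1 else stepExp M σ p (reachN M σ T n)

/-- Reachability probability `Pr^{M,σ}_s(◇T)`. -/
def reachProb {S A : Type} (M : MDP S A) (σ : Scheduler M) (s : S) (T : Set S) : ℝ :=
  ⨆ n : ℕ, reachN M σ T n (s, [])

/-- Probability of visiting `T` at some time `≥ j` within `j + n` steps, from path `p`. -/
def reachAfterN {S A : Type} (M : MDP S A) (σ : Scheduler M) (T : Set S) :
    ℕ → ℕ → FPath S A → ℝ
  | 0, n, p => reachN M σ T n p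
  | j + 1, n, p => stepExp M σ p (fun p' => reachAfterN M σ T j n p')

/-- Büchi probability `Pr^{M,σ}_s(□◇T)`: the probability of visiting `T` infinitely often. -/
def buchiProb {S A : Type} (M : MDP S A) (σ : Scheduler M) (s : S) (T : Set S) : ℝ :=
  ⨅ j : ℕ, ⨆ n : ℕ, reachAfterN M σ T j n (s, [])

/-- Expected sum of the rewards of the first `n+1` states (counting the current one). -/
def expRewN {S A : Type} (M : MDP S A) (σ : Scheduler M) (R : S → ℝ) :
    ℕ → FPath S A → ℝ
  | 0, p => R (fpLast p)
  | n + 1, p => R (fpLast p) + stepExp M σ p (fun p' => expRewN M σ R n p')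

/-- Expected total reward `E^{M,σ}_s(R)`. -/
def expTotalReward {S A : Type} (M : MDP S A) (σ : Scheduler M) (R : S → ℝ) (s : S) : ℝ :=
  limUnder atTop (fun n => expRewN M σ R n (s, []))

end

/-- States of the example MDP: `s`, `t₁`, `t₂`. -/
inductive St5 : Type where
  | s : St5
  | t1 : St5
  | t2 : St5
deriving DecidableEq

/-- Actions of the example MDP: `α`, `β`, `γ`. -/
inductive Ac5 : Type where
  | α : Ac5
  | β : Ac5
  | γ : Ac5
deriving DecidableEq

/-!
Only the first choice at `s` matters for `◇{t₁}`: `α` reaches `t₁` at once, while `β` leads to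
the trap `t₂`. Hence `Pr(◇{t₁}) = q`, the probability of `α` at the initial path. A memoryless
scheduler plays `α` with the same probability `q` at every visit of `s`, and misses `t₂` within
`k` visits of `s` only by playing `α` each time, so `Pr(◇{t₂})` is the supremum of `1 - q ^ k`:
it is `0` if `q = 1` and exceeds `q` otherwise. With memory, playing `α` at the first visit of `s`
and `β` at the second reaches both targets surely.
-/

section General

variable {S A : Type} {M : MDP S A}

theorem MDP.tsum_P_le_one (M : MDP S A) (x : S) (a : A) : ∑' y, M.P x a y ≤ 1 := by
  by_cases h : ∑' y, M.P x a y = 1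
  · exact h.le
  · rw [M.zero_of_not_enabled x a h]
    exact zero_le_one

theorem Scheduler.act_eq_zero_of_forall_P_eq_zero (σ : Scheduler M) {p : FPath S A} {a : A}
    (h : ∀ y, M.P (fpLast p) a y = 0) : σ.act p a = 0 :=
  σ.not_enabled p a (by simp [MDP.Enabled, h])

theorem Scheduler.act_le_one [Fintype A] (σ : Scheduler M) (p : FPath S A) (a : A) :
    σ.act p a ≤ 1 := by
  rw [← σ.sum_one p, tsum_fintype]
  exact Finset.single_le_sum (fun b _ => σ.nonneg p b) (Finset.mem_univ a)

noncomputable def Scheduler.ofChoice (M : MDP S A) (f : FPath S A → A)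
    (hf : ∀ p, M.Enabled (fpLast p) (f p)) : Scheduler M where
  act p a := if a = f p then 1 else 0
  nonneg p a := by split_ifs <;> norm_num
  sum_one p := tsum_ite_eq (f p) (fun _ => (1 : ℝ))
  not_enabled p a h := if_neg (by rintro rfl; exact h (hf p))

@[simp]
theorem fpLast_nil (x : S) : fpLast ((x, []) : FPath S A) = x := rfl

@[simp]
theorem fpLast_fpExt (p : FPath S A) (a : A) (y : S) : fpLast (fpExt p a y) = y := by
  simp [fpLast, fpExt]

theorem reachN_of_mem (σ : Scheduler M) {T : Set S} {p : FPath S A} (h : fpLast p ∈ T) (n : ℕ) :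
    reachN M σ T n p = 1 := by
  cases n <;> simp [reachN, h]

theorem reachN_succ_of_not_mem (σ : Scheduler M) {T : Set S} {p : FPath S A} (h : fpLast p ∉ T)
    (n : ℕ) : reachN M σ T (n + 1) p = stepExp M σ p (reachN M σ T n) := by
  rw [reachN, if_neg h]

theorem reachProb_eq_of_forall_le (σ : Scheduler M) {s : S} {T : Set S} {c : ℝ}
    (hle : ∀ n, reachN M σ T n (s, []) ≤ c) {m : ℕ} (hm : reachN M σ T m (s, []) = c) :
    reachProb M σ s T = c :=
  le_antisymm (ciSup_le hle) (hm ▸ le_ciSup ⟨c, Set.forall_mem_range.2 hle⟩ m)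

variable [Fintype S] [Fintype A]

theorem stepExp_le_one (σ : Scheduler M) (p : FPath S A) {g : FPath S A → ℝ}
    (hg : ∀ p', g p' ≤ 1) : stepExp M σ p g ≤ 1 :=
  calc stepExp M σ p g ≤ ∑' a, ∑' y, σ.act p a * M.P (fpLast p) a y := by
        simp only [stepExp, tsum_fintype]
        refine Finset.sum_le_sum fun a _ => Finset.sum_le_sum fun y _ => ?_
        exact mul_le_of_le_one_right (mul_nonneg (σ.nonneg p a) (M.nonneg _ _ _)) (hg _)
    _ = ∑' a, σ.act p a * ∑' y, M.P (fpLast p) a y := by simp_rw [tsum_mul_left]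
    _ ≤ ∑' a, σ.act p a := by
        refine Summable.tsum_le_tsum (fun a => ?_) (.of_finite) (.of_finite)
        exact mul_le_of_le_one_right (σ.nonneg p a) (M.tsum_P_le_one _ _)
    _ = 1 := σ.sum_one p

theorem reachN_le_one (σ : Scheduler M) (T : Set S) (n : ℕ) (p : FPath S A) :
    reachN M σ T n p ≤ 1 := by
  induction n generalizing p with
  | zero => rw [reachN]; split_ifs <;> norm_num
  | succ n ih =>
    rw [reachN]
    split_ifs
    · exact le_rfl
    · exact stepExp_le_one σ p ih

theorem reachN_le_reachProb (σ : Scheduler M) (s : S) (T : Set S) (n : ℕ) :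
    reachN M σ T n (s, []) ≤ reachProb M σ s T :=
  le_ciSup ⟨1, Set.forall_mem_range.2 fun n => reachN_le_one σ T n _⟩ n

end General

instance : Fintype St5 := ⟨{.s, .t1, .t2}, fun x => by cases x <;> decide⟩

instance : Fintype Ac5 := ⟨{.α, .β, .γ}, fun a => by cases a <;> decide⟩

theorem St5.sum_eq (f : St5 → ℝ) : ∑ x, f x = f .s + f .t1 + f .t2 := by
  change ∑ x ∈ {St5.s, St5.t1, St5.t2}, f x = _
  simp [add_assoc]

theorem Ac5.sum_eq (f : Ac5 → ℝ) : ∑ a, f a = f .α + f .β + f .γ := by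
  change ∑ a ∈ {Ac5.α, Ac5.β, Ac5.γ}, f a = _
  simp [add_assoc]

def exampleP : St5 → Ac5 → St5 → ℝ
  | .s, .α, .t1 | .s, .β, .t2 | .t1, .γ, .s | .t2, .γ, .t2 => 1
  | _, _, _ => 0

def exampleMDP : MDP St5 Ac5 where
  P := exampleP
  nonneg x a y := by cases x <;> cases a <;> cases y <;> simp [exampleP]
  le_one x a y := by cases x <;> cases a <;> cases y <;> simp [exampleP]
  exists_enabled x := ⟨if x = .s then .α else .γ, by
    cases x <;> simp [tsum_fintype, St5.sum_eq, exampleP]⟩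
  zero_of_not_enabled x a := by
    cases x <;> cases a <;> simp [tsum_fintype, St5.sum_eq, exampleP]

theorem eq_exampleMDP (M : MDP St5 Ac5)
    (h1 : M.P .s .α .t1 = 1) (h2 : M.P .s .β .t2 = 1)
    (h3 : M.P .t1 .γ .s = 1) (h4 : M.P .t2 .γ .t2 = 1)
    (h0 : ∀ x a y, M.P x a y ≠ 0 →
      (x = .s ∧ a = .α ∧ y = .t1) ∨ (x = .s ∧ a = .β ∧ y = .t2) ∨
      (x = .t1 ∧ a = .γ ∧ y = .s) ∨ (x = .t2 ∧ a = .γ ∧ y = .t2)) :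
    M = exampleMDP := by
  obtain ⟨P, _, _, _, _⟩ := M
  obtain rfl : P = exampleP := by
    funext x a y
    cases x <;> cases a <;> cases y <;>
      first
      | assumption
      | exact not_not.1 fun h => by simpa using h0 _ _ _ h
  rfl

namespace exampleMDP

variable (σ : Scheduler exampleMDP) {p : FPath St5 Ac5}

theorem act_add_act_of_last_s (hp : fpLast p = .s) : σ.act p .α + σ.act p .β = 1 := by
  have hγ : σ.act p .γ = 0 :=
    σ.act_eq_zero_of_forall_P_eq_zero fun y => by cases y <;> simp [hp, exampleMDP, exampleP]
  simpa [tsum_fintype, Ac5.sum_eq, hγ] using σ.sum_one p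

theorem act_γ_of_last_ne_s (hp : fpLast p ≠ .s) : σ.act p .γ = 1 := by
  have hzero : ∀ a ≠ Ac5.γ, σ.act p a = 0 := fun a ha =>
    σ.act_eq_zero_of_forall_P_eq_zero fun y => by
      cases h : fpLast p <;> cases a <;> cases y <;> simp_all [exampleMDP, exampleP]
  simpa [tsum_fintype, Ac5.sum_eq, hzero .α, hzero .β] using σ.sum_one p

theorem stepExp_of_last_s (hp : fpLast p = .s) (g : FPath St5 Ac5 → ℝ) :
    stepExp exampleMDP σ p g =
      σ.act p .α * g (fpExt p .α .t1) + (1 - σ.act p .α) * g (fpExt p .β .t2) := by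
  rw [← act_add_act_of_last_s σ hp]
  simp [stepExp, tsum_fintype, St5.sum_eq, Ac5.sum_eq, hp, exampleMDP, exampleP]

theorem stepExp_of_last_t1 (hp : fpLast p = .t1) (g : FPath St5 Ac5 → ℝ) :
    stepExp exampleMDP σ p g = g (fpExt p .γ .s) := by
  have hγ := act_γ_of_last_ne_s σ (p := p) (by simp [hp])
  simp [stepExp, tsum_fintype, St5.sum_eq, Ac5.sum_eq, hp, exampleMDP, exampleP, hγ]

theorem stepExp_of_last_t2 (hp : fpLast p = .t2) (g : FPath St5 Ac5 → ℝ) :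
    stepExp exampleMDP σ p g = g (fpExt p .γ .t2) := by
  have hγ := act_γ_of_last_ne_s σ (p := p) (by simp [hp])
  simp [stepExp, tsum_fintype, St5.sum_eq, Ac5.sum_eq, hp, exampleMDP, exampleP, hγ]

theorem reachN_t1_of_last_t2 (n : ℕ) (hp : fpLast p = .t2) :
    reachN exampleMDP σ {.t1} n p = 0 := by
  induction n generalizing p with
  | zero => simp [reachN, hp]
  | succ n ih => simp [reachN, hp, stepExp_of_last_t2 σ hp, ih]

theorem reachProb_t1 : reachProb exampleMDP σ .s {.t1} = σ.act (.s, []) .α := by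
  have hstep (n : ℕ) : reachN exampleMDP σ {.t1} (n + 1) (.s, []) = σ.act (.s, []) .α := by
    simp [reachN, stepExp_of_last_s σ (p := (.s, [])) rfl, reachN_of_mem, reachN_t1_of_last_t2]
  refine reachProb_eq_of_forall_le σ (fun n => ?_) (hstep 0)
  cases n with
  | zero => simpa [reachN] using σ.nonneg _ _
  | succ n => exact (hstep n).le

-- `(n + 1) / 2` is the number of visits of `s` before step `n` on the path `s t₁ s t₁ …`.
theorem reachN_t2_of_memoryless (hσ : σ.Memoryless) (n : ℕ) (hp : fpLast p = .s) :
    reachN exampleMDP σ {.t2} n p = 1 - σ.act (.s, []) .α ^ ((n + 1) / 2) := by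
  induction n using Nat.strong_induction_on generalizing p with
  | _ n ih =>
  have hact : σ.act p .α = σ.act (.s, []) .α := by rw [hσ p, hp]
  match n with
  | 0 => simp [reachN, hp]
  | 1 => simp [reachN, hp, stepExp_of_last_s σ hp, hact]
  | n + 2 =>
    have hq : reachN exampleMDP σ {.t2} n (fpExt (fpExt p .α .t1) .γ .s) =
        1 - σ.act (.s, []) .α ^ ((n + 1) / 2) := ih n (by omega) (by simp)
    rw [reachN_succ_of_not_mem σ (by simp [hp]), stepExp_of_last_s σ hp,
      reachN_succ_of_not_mem σ (by simp), stepExp_of_last_t1 σ (by simp), hq,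
      reachN_of_mem σ (by simp), hact, show (n + 2 + 1) / 2 = (n + 1) / 2 + 1 by omega]
    ring

noncomputable def firstαThenβ : Scheduler exampleMDP :=
  Scheduler.ofChoice exampleMDP
    (fun p => if fpLast p = .s then (if p.2 = [] then .α else .β) else .γ)
    (fun p => by
      cases fpLast p <;> split_ifs <;>
        simp_all [MDP.Enabled, tsum_fintype, St5.sum_eq, exampleMDP, exampleP])

theorem reachProb_firstαThenβ_t1 : reachProb exampleMDP firstαThenβ .s {.t1} = 1 := by
  simp [reachProb_t1, firstαThenβ, Scheduler.ofChoice]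

theorem reachProb_firstαThenβ_t2 : reachProb exampleMDP firstαThenβ .s {.t2} = 1 := by
  refine reachProb_eq_of_forall_le _ (fun n => reachN_le_one _ _ n _) (m := 3) ?_
  rw [reachN_succ_of_not_mem _ (by simp), stepExp_of_last_s _ rfl,
    reachN_of_mem _ (p := fpExt (St5.s, []) Ac5.β St5.t2) (by simp),
    reachN_succ_of_not_mem _ (by simp), stepExp_of_last_t1 _ (by simp),
    reachN_succ_of_not_mem _ (by simp), stepExp_of_last_s _ (by simp)]
  simp [reachN, firstαThenβ, Scheduler.ofChoice, fpExt, fpLast]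

theorem reachProb_t1_ne_reachProb_t2_of_memoryless (hσ : σ.Memoryless) : reachProb exampleMDP σ .s {.t1} ≠ reachProb exampleMDP σ .s {.t2} := by
  have hreach (n : ℕ) := reachN_t2_of_memoryless σ hσ n (p := (.s, [])) rfl
  rw [reachProb_t1]
  rcases (σ.act_le_one (.s, []) .α).eq_or_lt with hq | hq
  · have hzero : reachProb exampleMDP σ .s {.t2} = 0 :=
      reachProb_eq_of_forall_le σ (fun n => by simp [hreach, hq]) (m := 0) (by simp [reachN])
    rw [hzero, hq]
    exact one_ne_zero
  · obtain ⟨k, hk⟩ := exists_pow_lt_of_lt_one (sub_pos.2 hq) hq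
    have hle := reachN_le_reachProb σ .s {.t2} (2 * k)
    rw [hreach, show (2 * k + 1) / 2 = k by omega] at hle
    linarith

end exampleMDP

theorem memory_necessary_for_exact_equality
    (M : MDP St5 Ac5)
    (h1 : M.P St5.s Ac5.α St5.t1 = 1)
    (h2 : M.P St5.s Ac5.β St5.t2 = 1)
    (h3 : M.P St5.t1 Ac5.γ St5.s = 1)
    (h4 : M.P St5.t2 Ac5.γ St5.t2 = 1)
    (h0 : ∀ (x : St5) (a : Ac5) (y : St5), M.P x a y ≠ 0 →
      (x = St5.s ∧ a = Ac5.α ∧ y = St5.t1) ∨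
      (x = St5.s ∧ a = Ac5.β ∧ y = St5.t2) ∨
      (x = St5.t1 ∧ a = Ac5.γ ∧ y = St5.s) ∨
      (x = St5.t2 ∧ a = Ac5.γ ∧ y = St5.t2)) :
    (∃ σ : Scheduler M,
        reachProb M σ St5.s {St5.t1} = reachProb M σ St5.s {St5.t2}) ∧
    (∀ σ : Scheduler M, σ.Memoryless →
        reachProb M σ St5.s {St5.t1} ≠ reachProb M σ St5.s {St5.t2}) := by
  obtain rfl := eq_exampleMDP M h1 h2 h3 h4 h0
  refine ⟨⟨exampleMDP.firstαThenβ, ?_⟩, exampleMDP.reachProb_t1_ne_reachProb_t2_of_memoryless⟩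
  rw [exampleMDP.reachProb_firstαThenβ_t1, exampleMDP.reachProb_firstαThenβ_t2]
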